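/- Let 0 < α < 1, 0 < h < 1, A > 0, and set γ = 1 + h^α·(1 − 17α/24 + α²/8), γ₁ = α − h^α·(11α/12 − α²/4), γ₂ = α(1−α)/2 + h^α·(5α/24 − α²/8), and γ_k = |w_k^(α)| for k ≥ 3. Suppose a real sequence (e_n) satisfies e_0 = 0 and, for every n ≥ 1, e_n = γ^(−1)·( γ₁·e_{n−1} + γ₂·e_{n−2} + Σ_{k=3}^n γ_k·e_{n−k} ) + A_n (with e_{−1} interpreted as 0 when n = 1), where |A_n| < A·h^(3+α) for all n ≥ 1. Then for all n ≥ 1, |e_n| < (10·A/((1−α)·2^α))·n^α·h^(3+α). -/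

import Mathlib

/-!
Let `C = 10 A h^(3+α) / ((1-α) 2^α)`; we show `|e n| < C n^α` by strong induction. Since `γ ≥ 1`,
`γ₁ ≤ α = |w₁|` and `γ₁ + γ₂ ≤ |w₁| + |w₂|`, while `(n-1)^α ≥ (n-2)^α`, the history term is bounded
by `C ∑_{k=1}^n |w_k| (n-k)^α ≤ C n^α ∑_{k=1}^n |w_k| = C n^α (1 - ∏_{k=1}^n (1 - α/k))`.
Bernoulli's inequality makes `n^α ∏_{k=1}^n (1 - α/k)` nondecreasing, so it is at least its value
`1 - α` at `n = 1`. The history therefore contributes at most `C (n^α - (1 - α))`, and the slack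
`C (1 - α) ≥ A h^(3+α)` absorbs the local error.
-/

/-- The Grünwald weights `w_n^(α) = (-1)^n * C(α, n)`. -/
noncomputable def grunwaldW (α : ℝ) (n : ℕ) : ℝ :=
  (-1) ^ n * (Real.Gamma (α + 1) / (Real.Gamma ((n : ℝ) + 1) * Real.Gamma (α - (n : ℝ) + 1)))

open Finset

theorem grunwaldW_zero {α : ℝ} (hα : -1 < α) : grunwaldW α 0 = 1 := by
  have : Real.Gamma (α + 1) ≠ 0 := (Real.Gamma_pos_of_pos (by linarith)).ne'
  simp [grunwaldW, this]

-- No restriction on `α`: where `Γ` has a pole, Mathlib's junk value `Γ = 0` makes both sides vanish.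
theorem grunwaldW_succ (α : ℝ) (n : ℕ) :
    grunwaldW α (n + 1) = (1 - (α + 1) / (n + 1)) * grunwaldW α n := by
  have hn : ((n : ℝ) + 1) ≠ 0 := by positivity
  have hΓn : Real.Gamma ((n : ℝ) + 1 + 1) = (n + 1) * Real.Gamma (n + 1) :=
    Real.Gamma_add_one hn
  simp only [grunwaldW, Nat.cast_succ, hΓn, show α - (n + 1) + 1 = α - n by ring]
  by_cases hαn : α - n = 0
  · rw [hαn, Real.Gamma_zero, show α = n by linarith]
    simp [div_self hn]
  by_cases hΓ : Real.Gamma (α - n) = 0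
  · rw [Real.Gamma_add_one hαn, hΓ]
    simp
  rw [Real.Gamma_add_one hαn]
  field_simp
  ring

theorem grunwaldW_succ_eq_neg_mul_prod {α : ℝ} (hα : -1 < α) (n : ℕ) :
    grunwaldW α (n + 1) = -(α / (n + 1)) * ∏ k ∈ Icc 1 n, (1 - α / k) := by
  induction n with
  | zero => simp [grunwaldW_succ, grunwaldW_zero hα]
  | succ m ih =>
    rw [grunwaldW_succ, ih, prod_Icc_succ_top (by omega)]
    push_cast
    field_simp
    ring

theorem prod_one_sub_div_nonneg {α : ℝ} (hα : α ≤ 1) (n : ℕ) :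
    0 ≤ ∏ k ∈ Icc 1 n, (1 - α / k) := by
  refine prod_nonneg fun k hk => ?_
  have hk : (1 : ℝ) ≤ k := by exact_mod_cast (mem_Icc.mp hk).1
  rw [sub_nonneg, div_le_one (by linarith)]
  linarith

theorem abs_grunwaldW_succ {α : ℝ} (hα0 : 0 ≤ α) (hα1 : α ≤ 1) (n : ℕ) :
    |grunwaldW α (n + 1)| = α / (n + 1) * ∏ k ∈ Icc 1 n, (1 - α / k) := by
  rw [grunwaldW_succ_eq_neg_mul_prod (by linarith), neg_mul, abs_neg,
    abs_of_nonneg (mul_nonneg (by positivity) (prod_one_sub_div_nonneg hα1 n))]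

theorem sum_abs_grunwaldW {α : ℝ} (hα0 : 0 ≤ α) (hα1 : α ≤ 1) (n : ℕ) :
    ∑ k ∈ Icc 1 n, |grunwaldW α k| = 1 - ∏ k ∈ Icc 1 n, (1 - α / k) := by
  induction n with
  | zero => simp
  | succ m ih =>
    rw [sum_Icc_succ_top (by omega), prod_Icc_succ_top (by omega), ih,
      abs_grunwaldW_succ hα0 hα1]
    push_cast
    ring

theorem rpow_le_rpow_succ_mul_one_sub {α : ℝ} (hα0 : 0 ≤ α) (hα1 : α ≤ 1) (n : ℕ) :
    (n : ℝ) ^ α ≤ ((n : ℝ) + 1) ^ α * (1 - α / (n + 1)) := by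
  have hn : (0 : ℝ) < n + 1 := by positivity
  have hs : (-1 : ℝ) ≤ -(1 / (n + 1)) := by
    rw [neg_le_neg_iff, div_le_one hn]; linarith
  have hbern := rpow_one_add_le_one_add_mul_self hs hα0 hα1
  calc (n : ℝ) ^ α = (1 + -(1 / (n + 1))) ^ α * ((n : ℝ) + 1) ^ α := by
        rw [← Real.mul_rpow (by rw [← sub_eq_add_neg, sub_nonneg, div_le_one hn]; linarith)
          hn.le]
        congr 1
        field_simp
        ring
    _ ≤ (1 + α * -(1 / (n + 1))) * ((n : ℝ) + 1) ^ α := by gcongr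
    _ = ((n : ℝ) + 1) ^ α * (1 - α / (n + 1)) := by ring

theorem one_sub_le_rpow_mul_prod {α : ℝ} (hα0 : 0 ≤ α) (hα1 : α ≤ 1) {n : ℕ} (hn : 1 ≤ n) :
    1 - α ≤ (n : ℝ) ^ α * ∏ k ∈ Icc 1 n, (1 - α / k) := by
  have hmono : Monotone fun n : ℕ => (n : ℝ) ^ α * ∏ k ∈ Icc 1 n, (1 - α / k) := by
    refine monotone_nat_of_le_succ fun n => ?_
    rw [prod_Icc_succ_top (by omega), Nat.cast_succ, ← mul_assoc, mul_right_comm]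
    exact mul_le_mul_of_nonneg_right (rpow_le_rpow_succ_mul_one_sub hα0 hα1 n)
      (prod_one_sub_div_nonneg hα1 n)
  simpa using hmono hn

theorem sum_abs_grunwaldW_mul_rpow_le {α : ℝ} (hα0 : 0 ≤ α) (hα1 : α ≤ 1) {n : ℕ}
    (hn : 1 ≤ n) :
    ∑ k ∈ Icc 1 n, |grunwaldW α k| * ((n - k : ℕ) : ℝ) ^ α ≤ (n : ℝ) ^ α - (1 - α) := by
  calc ∑ k ∈ Icc 1 n, |grunwaldW α k| * ((n - k : ℕ) : ℝ) ^ α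
      ≤ ∑ k ∈ Icc 1 n, |grunwaldW α k| * (n : ℝ) ^ α := by
        gcongr with k
        exact_mod_cast Nat.sub_le n k
    _ = (n : ℝ) ^ α - (n : ℝ) ^ α * ∏ k ∈ Icc 1 n, (1 - α / k) := by
        rw [← sum_mul, sum_abs_grunwaldW hα0 hα1]; ring
    _ ≤ (n : ℝ) ^ α - (1 - α) := by linarith [one_sub_le_rpow_mul_prod hα0 hα1 hn]

theorem abs_grunwaldW_one {α : ℝ} (hα0 : 0 ≤ α) (hα1 : α ≤ 1) : |grunwaldW α 1| = α := by
  simpa using abs_grunwaldW_succ hα0 hα1 0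

theorem abs_grunwaldW_two {α : ℝ} (hα0 : 0 ≤ α) (hα1 : α ≤ 1) :
    |grunwaldW α 2| = α * (1 - α) / 2 := by
  rw [abs_grunwaldW_succ hα0 hα1 1]
  norm_num
  ring

section GrunwaldScheme

variable {α γ c₁ c₂ : ℝ} {e : ℕ → ℝ}

theorem abs_grunwald_history_le (hα0 : 0 < α) (hα1 : α ≤ 1) (hc₁0 : 0 ≤ c₁) (hc₂0 : 0 ≤ c₂)
    (hc₁ : c₁ ≤ α) (hc₁₂ : c₁ + c₂ ≤ α + α * (1 - α) / 2) {C : ℝ} (hC : 0 ≤ C) {N : ℕ}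
    (hN : 1 ≤ N) (hprev : ∀ m < N, |e m| ≤ C * (m : ℝ) ^ α) :
    |c₁ * e (N - 1) + c₂ * e (N - 2) + ∑ k ∈ Icc 3 N, |grunwaldW α k| * e (N - k)|
      ≤ C * ((N : ℝ) ^ α - (1 - α)) := by
  set x : ℕ → ℝ := fun k => ((N - k : ℕ) : ℝ) ^ α with hx
  have hx0 : 0 ≤ x 2 := by positivity
  have hx21 : x 2 ≤ x 1 := by
    simp only [hx]
    gcongr
    omega
  have hsplit : α * x 1 + α * (1 - α) / 2 * x 2 + ∑ k ∈ Icc 3 N, |grunwaldW α k| * x k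
      = ∑ k ∈ Icc 1 N, |grunwaldW α k| * x k := by
    rcases hN.eq_or_lt with rfl | hN2
    · simp [hx, Real.zero_rpow hα0.ne']
    have hIcc : Icc 1 N = insert 1 (insert 2 (Icc 3 N)) := by
      ext k
      simp only [mem_Icc, mem_insert]
      omega
    rw [hIcc, sum_insert (by simp), sum_insert (by simp), abs_grunwaldW_one hα0.le hα1,
      abs_grunwaldW_two hα0.le hα1, add_assoc]
  calc |c₁ * e (N - 1) + c₂ * e (N - 2) + ∑ k ∈ Icc 3 N, |grunwaldW α k| * e (N - k)|
      ≤ c₁ * |e (N - 1)| + c₂ * |e (N - 2)| + ∑ k ∈ Icc 3 N, |grunwaldW α k| * |e (N - k)| := by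
        refine (abs_add_le _ _).trans (add_le_add ((abs_add_le _ _).trans ?_)
          ((abs_sum_le_sum_abs _ _).trans_eq (by simp only [abs_mul, abs_abs])))
        rw [abs_mul, abs_mul, abs_of_nonneg hc₁0, abs_of_nonneg hc₂0]
    _ ≤ c₁ * (C * x 1) + c₂ * (C * x 2) + ∑ k ∈ Icc 3 N, |grunwaldW α k| * (C * x k) := by
        gcongr with k hk
        · exact hprev _ (by omega)
        · exact hprev _ (by omega)
        · exact hprev _ (by have := (mem_Icc.mp hk).1; omega)
    _ ≤ C * (α * x 1 + α * (1 - α) / 2 * x 2 + ∑ k ∈ Icc 3 N, |grunwaldW α k| * x k) := by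
        rw [mul_add C, mul_sum]
        gcongr ?_ + ∑ k ∈ Icc 3 N, ?_
        · nlinarith [mul_nonneg (sub_nonneg.2 hc₁) (sub_nonneg.2 hx21),
            mul_nonneg (sub_nonneg.2 hc₁₂) hx0]
        · exact le_of_eq (by ring)
    _ ≤ C * ((N : ℝ) ^ α - (1 - α)) := by
        rw [hsplit]
        exact mul_le_mul_of_nonneg_left (sum_abs_grunwaldW_mul_rpow_le hα0.le hα1 hN) hC

theorem abs_lt_rpow_of_grunwald_scheme (hα0 : 0 < α) (hα1 : α ≤ 1) (hγ : 1 ≤ γ)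
    (hc₁0 : 0 ≤ c₁) (hc₂0 : 0 ≤ c₂) (hc₁ : c₁ ≤ α) (hc₁₂ : c₁ + c₂ ≤ α + α * (1 - α) / 2)
    {r : ℕ → ℝ} {a C : ℝ} (haC : a ≤ C * (1 - α)) (he0 : e 0 = 0)
    (hr : ∀ n : ℕ, 1 ≤ n → |r n| < a)
    (hrec : ∀ n : ℕ, 1 ≤ n → e n = γ⁻¹ * (c₁ * e (n - 1) + c₂ * e (n - 2) +
      ∑ k ∈ Icc 3 n, |grunwaldW α k| * e (n - k)) + r n) :
    ∀ n : ℕ, 1 ≤ n → |e n| < C * (n : ℝ) ^ α := by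
  have hC : 0 ≤ C := by nlinarith [abs_nonneg (r 1), hr 1 le_rfl]
  intro n
  induction n using Nat.strong_induction_on with
  | _ n ih =>
    intro hn
    have hprev : ∀ m < n, |e m| ≤ C * (m : ℝ) ^ α := by
      intro m hm
      rcases Nat.eq_zero_or_pos m with rfl | hm1
      · simp [he0, Real.zero_rpow hα0.ne']
      · exact (ih m hm hm1).le
    set H := c₁ * e (n - 1) + c₂ * e (n - 2) + ∑ k ∈ Icc 3 n, |grunwaldW α k| * e (n - k)
    have hH := abs_grunwald_history_le hα0 hα1 hc₁0 hc₂0 hc₁ hc₁₂ hC hn hprev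
    calc |e n| = |γ⁻¹ * H + r n| := by rw [hrec n hn]
      _ ≤ |γ⁻¹ * H| + |r n| := abs_add_le _ _
      _ = γ⁻¹ * |H| + |r n| := by
          rw [abs_mul, abs_of_pos (inv_pos.2 (zero_lt_one.trans_le hγ))]
      _ ≤ |H| + |r n| := by
          refine add_le_add_left ?_ _
          exact mul_le_of_le_one_left (abs_nonneg H) (inv_le_one_of_one_le₀ hγ)
      _ < C * ((n : ℝ) ^ α - (1 - α)) + a := add_lt_add_of_le_of_lt hH (hr n hn)
      _ ≤ C * (n : ℝ) ^ α := by linarith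

end GrunwaldScheme

/-- growth estimate for the errors of the third order scheme. -/
theorem third_order_error_estimate
    (α h A : ℝ) (hα0 : 0 < α) (hα1 : α < 1) (hh0 : 0 < h) (hh1 : h < 1) (hA : 0 < A)
    (e Aseq : ℕ → ℝ) (he0 : e 0 = 0)
    (hAseq : ∀ n : ℕ, 1 ≤ n → |Aseq n| < A * h ^ (3 + α))
    (hrec : ∀ n : ℕ, 1 ≤ n →
      e n = (1 + h ^ α * (1 - 17 * α / 24 + α ^ 2 / 8))⁻¹ *
          ((α - h ^ α * (11 * α / 12 - α ^ 2 / 4)) * e (n - 1) +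
            (α * (1 - α) / 2 + h ^ α * (5 * α / 24 - α ^ 2 / 8)) * e (n - 2) +
            ∑ k ∈ Finset.Icc 3 n, |grunwaldW α k| * e (n - k)) + Aseq n) :
    ∀ n : ℕ, 1 ≤ n →
      |e n| < 10 * A / ((1 - α) * (2 : ℝ) ^ α) * (n : ℝ) ^ α * h ^ (3 + α) := by
  have ht0 : 0 ≤ h ^ α := by positivity
  have ht1 : h ^ α ≤ 1 := Real.rpow_le_one hh0.le hh1.le hα0.le
  have h2α : (2 : ℝ) ^ α ≤ 2 := by
    simpa using Real.rpow_le_rpow_of_exponent_le (by norm_num : (1 : ℝ) ≤ 2) hα1.le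
  have haC : A * h ^ (3 + α) ≤ 10 * A / ((1 - α) * (2 : ℝ) ^ α) * h ^ (3 + α) * (1 - α) := by
    have h1α : 1 - α ≠ 0 := by linarith
    rw [show 10 * A / ((1 - α) * (2 : ℝ) ^ α) * h ^ (3 + α) * (1 - α)
      = 10 * A / (2 : ℝ) ^ α * h ^ (3 + α) by field_simp]
    gcongr
    rw [le_div_iff₀ (by positivity)]
    nlinarith
  have hq : 0 ≤ 1 - 17 * α / 24 + α ^ 2 / 8 := by nlinarith
  have hp₁ : 0 ≤ 11 * α / 12 - α ^ 2 / 4 := by nlinarith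
  have hp₂ : 0 ≤ 5 * α / 24 - α ^ 2 / 8 := by nlinarith
  intro n hn
  have hbound := abs_lt_rpow_of_grunwald_scheme hα0 hα1.le
    (le_add_of_nonneg_right (mul_nonneg ht0 hq))
    (by nlinarith [mul_le_of_le_one_left hp₁ ht1])
    (add_nonneg (by nlinarith) (mul_nonneg ht0 hp₂))
    (sub_le_self _ (mul_nonneg ht0 hp₁))
    (by nlinarith [mul_nonneg ht0 (by nlinarith : 0 ≤ α * (17 / 24 - α / 8))])
    haC he0 hAseq hrec n hn
  linarith
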